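/- arXiv:1203.2288 — 2 statements merged into one kernel-verified Lean document; each statement's English description precedes it below -/
import Mathlib

section
/- For all positive reals a, b: S(a,b) − H(a,b) ≤ (9/4)(C(a,b) − R(a,b)). -/
noncomputable def meanA (a b : ℝ) : ℝ := (a + b) / 2
noncomputable def meanG (a b : ℝ) : ℝ := Real.sqrt (a * b)
noncomputable def meanH (a b : ℝ) : ℝ := 2 * a * b / (a + b)
noncomputable def meanN (a b : ℝ) : ℝ := (a + Real.sqrt (a * b) + b) / 3
noncomputable def meanC (a b : ℝ) : ℝ := (a ^ 2 + b ^ 2) / (a + b)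
noncomputable def meanS (a b : ℝ) : ℝ := Real.sqrt ((a ^ 2 + b ^ 2) / 2)
noncomputable def meanR (a b : ℝ) : ℝ := 2 * (a ^ 2 + a * b + b ^ 2) / (3 * (a + b))
noncomputable def triDelta (a b : ℝ) : ℝ := (a - b) ^ 2 / (a + b)
noncomputable def hellinger (a b : ℝ) : ℝ := (Real.sqrt a - Real.sqrt b) ^ 2 / 2


/-!
Since `A · C = (a² + b²) / 2 = S²`, the square-root mean is the geometric mean of the arithmetic
mean `A` and the contraharmonic mean `C`, so `S ≤ (A + C) / 2` by AM–GM. Both `(A + C) / 2 - H` and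
`(9 / 4) (C - R)` equal `(3 / 4) (a - b)² / (a + b)`.
-/

theorem meanG_le_meanA {x y : ℝ} (hx : 0 ≤ x) (hy : 0 ≤ y) : meanG x y ≤ meanA x y := by
  rw [meanG, meanA, Real.sqrt_le_left (by positivity)]
  nlinarith [sq_nonneg (x - y)]

section

variable {a b : ℝ}

theorem meanS_eq_meanG_meanA_meanC (hab : a + b ≠ 0) :
    meanS a b = meanG (meanA a b) (meanC a b) := by
  rw [meanS, meanG, meanA, meanC]
  congr 1
  field_simp

theorem meanS_le_meanA_add_meanC_div_two (hab : 0 < a + b) :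
    meanS a b ≤ (meanA a b + meanC a b) / 2 := by
  have hA : 0 ≤ meanA a b := by rw [meanA]; positivity
  have hC : 0 ≤ meanC a b := by rw [meanC]; positivity
  rw [meanS_eq_meanG_meanA_meanC hab.ne']
  exact meanG_le_meanA hA hC

theorem meanC_sub_meanR (hab : a + b ≠ 0) : meanC a b - meanR a b = triDelta a b / 3 := by
  rw [meanC, meanR, triDelta]
  field_simp
  ring

theorem meanA_add_meanC_div_two_sub_meanH (hab : a + b ≠ 0) :
    (meanA a b + meanC a b) / 2 - meanH a b = 3 / 4 * triDelta a b := by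
  rw [meanA, meanC, meanH, triDelta]
  field_simp
  ring

end

theorem stmt_8 (a b : ℝ) (ha : 0 < a) (hb : 0 < b) :
    meanS a b - meanH a b ≤ (9 / 4) * (meanC a b - meanR a b) := by
  have hab : 0 < a + b := add_pos ha hb
  calc meanS a b - meanH a b ≤ (meanA a b + meanC a b) / 2 - meanH a b :=
        sub_le_sub_right (meanS_le_meanA_add_meanC_div_two hab) _
    _ = 9 / 4 * (meanC a b - meanR a b) := by
        rw [meanA_add_meanC_div_two_sub_meanH hab.ne', meanC_sub_meanR hab.ne']
        ring
end

section
/- For all positive reals a, b: 6 R(a,b) ≥ G(a,b) + 5 S(a,b), i.e. S(a,b) − G(a,b) ≤ (6/5)(R(a,b) − G(a,b)). -/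
/-! Write `s = S(a,b)` and `g = G(a,b)`. Then `(a + b)² = 2(s² + g²)` and `a² + ab + b² = 2s² + g²`,
so the claim reads `(g + 5s)(a + b) ≤ 4(2s² + g²)`. Squaring both sides, the difference is
`(s - g)²(14s² + 8sg + 14g²) ≥ 0`. -/

lemma add_five_mul_mul_le {s g u : ℝ} (hs : 0 ≤ s) (hg : 0 ≤ g) (hu : 0 ≤ u)
    (hu2 : u ^ 2 = 2 * (s ^ 2 + g ^ 2)) :
    (g + 5 * s) * u ≤ 4 * (2 * s ^ 2 + g ^ 2) := by
  have hsq : ((g + 5 * s) * u) ^ 2 ≤ (4 * (2 * s ^ 2 + g ^ 2)) ^ 2 := by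
    rw [mul_pow, hu2]
    nlinarith [mul_nonneg (sq_nonneg (s - g)) (by positivity : 0 ≤ 14 * s ^ 2 + 8 * s * g + 14 * g ^ 2)]
  exact (pow_le_pow_iff_left₀ (by positivity) (by positivity) two_ne_zero).mp hsq

lemma meanG_sq {a b : ℝ} (ha : 0 ≤ a) (hb : 0 ≤ b) : meanG a b ^ 2 = a * b :=
  Real.sq_sqrt (mul_nonneg ha hb)

lemma meanS_sq (a b : ℝ) : meanS a b ^ 2 = (a ^ 2 + b ^ 2) / 2 :=
  Real.sq_sqrt (by positivity)

theorem stmt_15 (a b : ℝ) (ha : 0 < a) (hb : 0 < b) :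
    meanG a b + 5 * meanS a b ≤ 6 * meanR a b := by
  have hab : 0 < a + b := add_pos ha hb
  have hG := meanG_sq ha.le hb.le
  have hS := meanS_sq a b
  have h6R : 6 * meanR a b = 4 * (2 * meanS a b ^ 2 + meanG a b ^ 2) / (a + b) := by
    rw [meanR, hS, hG]
    field_simp
    ring
  have key : (meanG a b + 5 * meanS a b) * (a + b) ≤ 4 * (2 * meanS a b ^ 2 + meanG a b ^ 2) :=
    add_five_mul_mul_le (Real.sqrt_nonneg _) (Real.sqrt_nonneg _) hab.le (by rw [hS, hG]; ring)
  rw [h6R, le_div_iff₀ hab]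
  exact key
end
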